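/- arXiv:2102.12535 — 2 statements merged into one kernel-verified Lean document; each statement's English description precedes it below -/
import Mathlib

section
/- For a random caterpillar with m ≥ 2 spine nodes, R_n/n^2 converges to (2m-1)/m^2 in L^1 as n → ∞. -/
open Finset Filter MeasureTheory
open scoped ENNReal

/-- Number of leaves attached to spine node `i` given attachment choices `ω`. -/
def leafCount {m n : ℕ} (ω : Fin n → Fin m) (i : Fin m) : ℕ :=
  (Finset.univ.filter (fun j => ω j = i)).card

/-- Degree of spine node `i` in the caterpillar. -/
def degS {m n : ℕ} (ω : Fin n → Fin m) (i : Fin m) : ℕ :=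
  leafCount ω i + (if i.val = 0 ∨ i.val = m - 1 then 1 else 2)

/-- Randić index with parameter α = 1: sum over edges of the product of the endpoint
degrees, i.e. `Σ_{i=2}^m D_{i-1} D_i + Σ_i X_i D_i` (each leaf has degree 1). -/
def randic {m n : ℕ} (ω : Fin n → Fin m) : ℕ :=
  (∑ i : Fin m, if h : i.val + 1 < m then degS ω i * degS ω ⟨i.val + 1, h⟩ else 0)
    + ∑ i : Fin m, leafCount ω i * degS ω i

lemma sum_indic_one {ι : Type*} [Fintype ι] [DecidableEq ι] {m : ℕ} (j : ι) (i : Fin m) :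
    ∑ ω : ι → Fin m, (if ω j = i then (1:ℕ) else 0) = m ^ (Fintype.card ι - 1) := by
  rw [← Equiv.sum_comp (Equiv.funSplitAt j (Fin m)).symm]
  rw [Fintype.sum_prod_type]
  have h1 : ∀ (x : Fin m) (g : {k // k ≠ j} → Fin m),
      (Equiv.funSplitAt j (Fin m)).symm (x, g) j = x := by
    intro x g; simp [Equiv.funSplitAt, Equiv.piSplitAt]
  simp only [h1]
  rw [Finset.sum_comm]
  simp [Finset.sum_ite_eq', Fintype.card_fun, Set.card_ne_eq]

lemma sum_indic_two {ι : Type*} [Fintype ι] [DecidableEq ι] {m : ℕ} (j k : ι) (hjk : k ≠ j)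
    (i : Fin m) :
    ∑ ω : ι → Fin m, (if ω j = i then (1:ℕ) else 0) * (if ω k = i then (1:ℕ) else 0)
      = m ^ (Fintype.card ι - 2) := by
  rw [← Equiv.sum_comp (Equiv.funSplitAt j (Fin m)).symm]
  rw [Fintype.sum_prod_type]
  have h1 : ∀ (x : Fin m) (g : {l // l ≠ j} → Fin m),
      (Equiv.funSplitAt j (Fin m)).symm (x, g) j = x := by
    intro x g; simp [Equiv.funSplitAt, Equiv.piSplitAt]
  have h2 : ∀ (x : Fin m) (g : {l // l ≠ j} → Fin m),
      (Equiv.funSplitAt j (Fin m)).symm (x, g) k = g ⟨k, hjk⟩ := by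
    intro x g; simp [Equiv.funSplitAt, Equiv.piSplitAt, hjk]
  simp only [h1, h2]
  have h3 : ∀ x : Fin m, ∑ g : {l // l ≠ j} → Fin m,
      (if x = i then (1:ℕ) else 0) * (if g ⟨k, hjk⟩ = i then (1:ℕ) else 0)
      = (if x = i then (1:ℕ) else 0) * m ^ (Fintype.card {l // l ≠ j} - 1) := by
    intro x
    rw [← Finset.mul_sum, sum_indic_one (⟨k, hjk⟩ : {l // l ≠ j}) i]
  simp only [h3]
  have hcard : Fintype.card {l // l ≠ j} - 1 = Fintype.card ι - 2 := by
    have : Fintype.card {l // l ≠ j} = Fintype.card ι - 1 := Set.card_ne_eq j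
    omega
  simp [Finset.sum_ite_eq', hcard,
    show Fintype.card ι - 1 - 1 = Fintype.card ι - 2 from by omega]

lemma leafCount_eq_sum {m n : ℕ} (ω : Fin n → Fin m) (i : Fin m) :
    leafCount ω i = ∑ j : Fin n, (if ω j = i then (1:ℕ) else 0) := by
  unfold leafCount
  rw [Finset.card_filter]

lemma sum_leafCount {m k : ℕ} (i : Fin m) :
    ∑ ω : Fin (k+2) → Fin m, leafCount ω i = (k+2) * m ^ (k+1) := by
  simp only [leafCount_eq_sum]
  rw [Finset.sum_comm]
  have : ∀ j : Fin (k+2), ∑ ω : Fin (k+2) → Fin m, (if ω j = i then (1:ℕ) else 0)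
      = m ^ (k+1) := by
    intro j
    rw [sum_indic_one j i]
    congr 1
    simp
  simp [this]

lemma sum_leafCount_sq {m k : ℕ} (i : Fin m) :
    ∑ ω : Fin (k+2) → Fin m, (leafCount ω i)^2
      = (k+2) * m ^ (k+1) + (k+2) * (k+1) * m ^ k := by
  simp only [leafCount_eq_sum, sq, Finset.sum_mul_sum]
  rw [Finset.sum_comm]
  have key : ∀ j : Fin (k+2),
      (∑ j2 : Fin (k+2), ∑ ω : Fin (k+2) → Fin m,
        (if ω j = i then (1:ℕ) else 0) * (if ω j2 = i then (1:ℕ) else 0))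
      = m ^ (k+1) + (k+1) * m ^ k := by
    intro j
    rw [Finset.sum_eq_sum_sdiff_singleton_add (Finset.mem_univ j)]
    have h1 : ∑ ω : Fin (k+2) → Fin m,
        (if ω j = i then (1:ℕ) else 0) * (if ω j = i then (1:ℕ) else 0) = m ^ (k+1) := by
      have : ∀ ω : Fin (k+2) → Fin m,
          (if ω j = i then (1:ℕ) else 0) * (if ω j = i then (1:ℕ) else 0)
          = (if ω j = i then (1:ℕ) else 0) := by intro ω; split <;> simp
      simp only [this]
      rw [sum_indic_one j i]; congr 1; simp
    have h2 : ∀ j2 ∈ Finset.univ \ {j}, ∑ ω : Fin (k+2) → Fin m,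
        (if ω j = i then (1:ℕ) else 0) * (if ω j2 = i then (1:ℕ) else 0) = m ^ k := by
      intro j2 hj2
      simp only [Finset.mem_sdiff, Finset.mem_singleton] at hj2
      rw [sum_indic_two j j2 hj2.2 i]; congr 1; simp
    rw [Finset.sum_congr rfl h2, h1, Finset.sum_const]
    have : (Finset.univ \ {j} : Finset (Fin (k+2))).card = k + 1 := by
      rw [Finset.sdiff_singleton_eq_erase, Finset.card_erase_of_mem (Finset.mem_univ j)]
      simp
    rw [this, smul_eq_mul]
    ring
  have swap : ∀ j : Fin (k+2),
      (∑ ω : Fin (k+2) → Fin m, ∑ j2 : Fin (k+2),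
        (if ω j = i then (1:ℕ) else 0) * (if ω j2 = i then (1:ℕ) else 0))
      = ∑ j2 : Fin (k+2), ∑ ω : Fin (k+2) → Fin m,
        (if ω j = i then (1:ℕ) else 0) * (if ω j2 = i then (1:ℕ) else 0) := by
    intro j
    exact Finset.sum_comm
  rw [Finset.sum_congr rfl fun j _ => (swap j).trans (key j), Finset.sum_const]
  simp only [Finset.card_univ, Fintype.card_fin, smul_eq_mul]
  ring

lemma card_fun_fin (m k : ℕ) : Fintype.card (Fin (k+2) → Fin m) = m ^ (k+2) := by
  simp [Fintype.card_fun]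

lemma sum_dev_sq_int {m k : ℕ} (i : Fin m) :
    ∑ ω : Fin (k+2) → Fin m, ((m:ℤ) * leafCount ω i - (k+2))^2
      = (k+2) * ((m:ℤ) - 1) * m ^ (k+2) := by
  have hz1 : ∑ ω : Fin (k+2) → Fin m, (leafCount ω i : ℤ) = (k+2) * (m:ℤ) ^ (k+1) := by
    rw [← Nat.cast_sum, sum_leafCount i]; push_cast; ring
  have hz2 : ∑ ω : Fin (k+2) → Fin m, ((leafCount ω i : ℤ))^2
      = (k+2) * (m:ℤ) ^ (k+1) + (k+2) * (k+1) * (m:ℤ) ^ k := by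
    have : ∀ ω : Fin (k+2) → Fin m, ((leafCount ω i : ℤ))^2 = ((leafCount ω i ^ 2 : ℕ) : ℤ) := by
      intro ω; push_cast; ring
    rw [Finset.sum_congr rfl fun ω _ => this ω, ← Nat.cast_sum, sum_leafCount_sq i]
    push_cast; ring
  have expand : ∑ ω : Fin (k+2) → Fin m, ((m:ℤ) * leafCount ω i - (k+2))^2
      = (m:ℤ)^2 * (∑ ω : Fin (k+2) → Fin m, ((leafCount ω i : ℤ))^2)
        - 2 * m * (k+2) * (∑ ω : Fin (k+2) → Fin m, (leafCount ω i : ℤ))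
        + ((k:ℤ)+2)^2 * (m:ℤ) ^ (k+2) := by
    rw [Finset.mul_sum, Finset.mul_sum, ← Finset.sum_sub_distrib]
    have hcard : ∑ _ω : Fin (k+2) → Fin m, ((k:ℤ)+2)^2 = (m:ℤ)^(k+2) * ((k:ℤ)+2)^2 := by
      rw [Finset.sum_const, Finset.card_univ, card_fun_fin, nsmul_eq_mul]
      push_cast; ring
    rw [show ((k:ℤ)+2)^2 * (m:ℤ) ^ (k+2) = ∑ _ω : Fin (k+2) → Fin m, ((k:ℤ)+2)^2 by
      rw [hcard]; ring]
    rw [← Finset.sum_add_distrib]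
    apply Finset.sum_congr rfl
    intro ω _
    push_cast
    ring
  rw [expand, hz1, hz2]
  simp only [pow_succ]
  push_cast
  ring

lemma leafCount_le {m n : ℕ} (ω : Fin n → Fin m) (i : Fin m) : leafCount ω i ≤ n := by
  have := Finset.card_filter_le (Finset.univ : Finset (Fin n)) (fun j => ω j = i)
  simpa [leafCount] using this

lemma sum_dev_sq_real {m k : ℕ} (hm : 2 ≤ m) (i : Fin m) :
    ∑ ω : Fin (k+2) → Fin m, ((leafCount ω i : ℝ)/(k+2) - 1/m)^2
      ≤ (m:ℝ) ^ (k+2) / (k+2) := by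
  have hm0 : (0:ℝ) < m := by positivity
  have hn0 : (0:ℝ) < (k:ℝ) + 2 := by positivity
  have hint : ∑ ω : Fin (k+2) → Fin m, (((m:ℝ) * leafCount ω i - (k+2)))^2
      = (k+2) * ((m:ℝ) - 1) * m ^ (k+2) := by
    have h := sum_dev_sq_int (k := k) i
    have := congrArg (fun z : ℤ => (z : ℝ)) h
    push_cast at this
    convert this using 2 <;> push_cast <;> ring
  have heq : ∀ ω : Fin (k+2) → Fin m, ((leafCount ω i : ℝ)/(k+2) - 1/m)^2
      = (((m:ℝ) * leafCount ω i - (k+2)))^2 / ((k+2)*m)^2 := by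
    intro ω
    field_simp
  rw [Finset.sum_congr rfl fun ω _ => heq ω, ← Finset.sum_div, hint]
  rw [div_le_div_iff₀ (by positivity) hn0]
  have h1 : ((m:ℝ) - 1) ≤ m^2 := by nlinarith
  have c0 : (0:ℝ) ≤ ((k:ℝ)+2)^2 * (m:ℝ)^(k+2) := by positivity
  nlinarith [mul_le_mul_of_nonneg_left h1 c0]

lemma sum_dev_le {m k : ℕ} (hm : 2 ≤ m) (i : Fin m) :
    ∑ ω : Fin (k+2) → Fin m, |(leafCount ω i : ℝ)/(k+2) - 1/m|
      ≤ (m:ℝ) ^ (k+2) / Real.sqrt (k+2) := by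
  set D : (Fin (k+2) → Fin m) → ℝ := fun ω => |(leafCount ω i : ℝ)/(k+2) - 1/m| with hD
  have hS0 : 0 ≤ ∑ ω, D ω := Finset.sum_nonneg fun ω _ => abs_nonneg _
  have hcs : (∑ ω, D ω)^2 ≤ (m:ℝ)^(k+2) * ((m:ℝ) ^ (k+2) / (k+2)) := by
    have h1 : (∑ ω, D ω)^2 ≤ (∑ _ω : Fin (k+2) → Fin m, (1:ℝ)^2) * ∑ ω, (D ω)^2 := by
      have := Finset.sum_mul_sq_le_sq_mul_sq Finset.univ (fun _ => (1:ℝ)) D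
      simpa using this
    have h2 : (∑ _ω : Fin (k+2) → Fin m, (1:ℝ)^2) = (m:ℝ)^(k+2) := by
      rw [Finset.sum_const, Finset.card_univ, card_fun_fin, nsmul_eq_mul]
      push_cast; ring
    have h3 : ∑ ω, (D ω)^2 ≤ (m:ℝ) ^ (k+2) / (k+2) := by
      have := sum_dev_sq_real (k := k) hm i
      calc ∑ ω, (D ω)^2 = ∑ ω : Fin (k+2) → Fin m, ((leafCount ω i : ℝ)/(k+2) - 1/m)^2 := by
            apply Finset.sum_congr rfl; intro ω _; rw [hD]; exact sq_abs _
        _ ≤ _ := this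
    calc (∑ ω, D ω)^2 ≤ (∑ _ω : Fin (k+2) → Fin m, (1:ℝ)^2) * ∑ ω, (D ω)^2 := h1
      _ = (m:ℝ)^(k+2) * ∑ ω, (D ω)^2 := by rw [h2]
      _ ≤ (m:ℝ)^(k+2) * ((m:ℝ) ^ (k+2) / (k+2)) := by
          apply mul_le_mul_of_nonneg_left h3 (by positivity)
  have hrhs : (m:ℝ) ^ (k+2) / Real.sqrt (k+2) = Real.sqrt ((m:ℝ)^(k+2) * ((m:ℝ) ^ (k+2) / (k+2))) := by
    rw [show (m:ℝ)^(k+2) * ((m:ℝ) ^ (k+2) / (k+2)) = ((m:ℝ)^(k+2))^2 / ((k:ℝ)+2) by push_cast; ring]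
    rw [Real.sqrt_div (by positivity), Real.sqrt_sq (by positivity)]
  rw [hrhs]
  calc ∑ ω, D ω = Real.sqrt ((∑ ω, D ω)^2) := (Real.sqrt_sq hS0).symm
    _ ≤ _ := Real.sqrt_le_sqrt hcs
lemma prod_bound (n : ℕ) (hn : 1 ≤ n) (A B a β β' : ℝ)
    (hA0 : 0 ≤ A) (hA1 : A ≤ 1) (hB0 : 0 ≤ B) (hB1 : B ≤ 1) (ha0 : 0 ≤ a) (ha1 : a ≤ 1)
    (hβ0 : 0 ≤ β) (hβ : β ≤ 2/n) (hβ'0 : 0 ≤ β') (hβ' : β' ≤ 2/n) :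
    |(A+β)*(B+β') - a*a| ≤ |A - a| + |B - a| + 8/n := by
  have hn0 : (0:ℝ) < n := by exact_mod_cast Nat.pos_of_ne_zero (by omega)
  have h2n : (2:ℝ)/n ≤ 2 := by
    rw [div_le_iff₀ hn0]; nlinarith [(by exact_mod_cast hn : (1:ℝ) ≤ n)]
  have hu := le_abs_self (A - a)
  have hu' := neg_abs_le (A - a)
  have hv := le_abs_self (B - a)
  have hv' := neg_abs_le (B - a)
  have e : (A+β)*(B+β') - a*a = (A-a)*B + a*(B-a) + A*β' + β*B + β*β' := by ring
  have t1 : (A-a)*B ≤ |A - a| :=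
    (mul_le_mul_of_nonneg_right hu hB0).trans (mul_le_of_le_one_right (abs_nonneg _) hB1)
  have t2 : a*(B-a) ≤ |B - a| :=
    (mul_le_mul_of_nonneg_left hv ha0).trans (mul_le_of_le_one_left (abs_nonneg _) ha1)
  have t3 : A*β' ≤ 2/n := by
    calc A*β' ≤ 1*(2/n) := mul_le_mul hA1 hβ' hβ'0 zero_le_one
      _ = 2/n := one_mul _
  have t4 : β*B ≤ 2/n := by
    calc β*B ≤ (2/n)*1 := mul_le_mul hβ hB1 hB0 (by positivity)
      _ = 2/n := mul_one _
  have t5 : β*β' ≤ 4/n := by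
    calc β*β' ≤ (2/n)*2 := mul_le_mul hβ (hβ'.trans h2n) hβ'0 (by positivity)
      _ = 4/n := by ring
  have t1' : -|A - a| ≤ (A-a)*B := by
    have h1 : (-|A - a|) * B ≤ (A-a)*B := mul_le_mul_of_nonneg_right hu' hB0
    have h2 : -|A - a| ≤ (-|A - a|) * B := by
      have : |A - a| * B ≤ |A - a| := mul_le_of_le_one_right (abs_nonneg _) hB1
      nlinarith
    linarith
  have t2' : -|B - a| ≤ a*(B-a) := by
    have h1 : a*(-|B - a|) ≤ a*(B-a) := mul_le_mul_of_nonneg_left hv' ha0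
    have h2 : -|B - a| ≤ a*(-|B - a|) := by
      have : a*|B - a| ≤ |B - a| := mul_le_of_le_one_left (abs_nonneg _) ha1
      nlinarith
    linarith
  have p3 : 0 ≤ A*β' := mul_nonneg hA0 hβ'0
  have p4 : 0 ≤ β*B := mul_nonneg hβ0 hB0
  have p5 : 0 ≤ β*β' := mul_nonneg hβ0 hβ'0
  have h8 : 2/(n:ℝ) + 2/(n:ℝ) + 4/(n:ℝ) = 8/(n:ℝ) := by ring
  have h80 : (0:ℝ) ≤ 8/(n:ℝ) := by positivity
  rw [abs_le]
  constructor <;> rw [e] <;> linarith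

lemma self_bound (n : ℕ) (hn : 1 ≤ n) (A a β : ℝ)
    (hA0 : 0 ≤ A) (hA1 : A ≤ 1) (ha0 : 0 ≤ a) (ha1 : a ≤ 1)
    (hβ0 : 0 ≤ β) (hβ : β ≤ 2/n) :
    |A*(A+β) - a*a| ≤ 2*|A - a| + 2/n := by
  have hn0 : (0:ℝ) < n := by exact_mod_cast Nat.pos_of_ne_zero (by omega)
  have hu := le_abs_self (A - a)
  have hu' := neg_abs_le (A - a)
  have e : A*(A+β) - a*a = (A-a)*(A+a) + A*β := by ring
  have hAa0 : (0:ℝ) ≤ A + a := by linarith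
  have hAa2 : A + a ≤ 2 := by linarith
  have t1 : (A-a)*(A+a) ≤ 2*|A - a| := by
    calc (A-a)*(A+a) ≤ |A - a| * (A+a) := mul_le_mul_of_nonneg_right hu hAa0
      _ ≤ |A - a| * 2 := mul_le_mul_of_nonneg_left hAa2 (abs_nonneg _)
      _ = 2*|A - a| := mul_comm _ _
  have t1' : -(2*|A - a|) ≤ (A-a)*(A+a) := by
    calc -(2*|A - a|) = (-|A - a|) * 2 := by ring
      _ ≤ (-|A - a|) * (A+a) := by
          have := mul_le_mul_of_nonneg_left hAa2 (abs_nonneg (A-a))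
          nlinarith
      _ ≤ (A-a)*(A+a) := mul_le_mul_of_nonneg_right hu' hAa0
  have t2 : A*β ≤ 2/n := by
    calc A*β ≤ 1*(2/n) := mul_le_mul hA1 hβ hβ0 zero_le_one
      _ = 2/n := one_mul _
  have p2 : 0 ≤ A*β := mul_nonneg hA0 hβ0
  rw [abs_le]
  constructor <;> rw [e] <;> linarith
lemma pointwise_bound {m n : ℕ} (hm : 2 ≤ m) (hn : 1 ≤ n) (ω : Fin n → Fin m) :
    |(randic ω : ℝ)/(n:ℝ)^2 - (2*(m:ℝ)-1)/(m:ℝ)^2|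
      ≤ ((m:ℝ)+3) * (∑ i : Fin m, |(leafCount ω i : ℝ)/(n:ℝ) - 1/(m:ℝ)|) + 10*(m:ℝ)/(n:ℝ) := by
  have hm0 : (0:ℝ) < m := by positivity
  have hn0 : (0:ℝ) < n := by exact_mod_cast Nat.pos_of_ne_zero (by omega)
  set D : Fin m → ℝ := fun i => |(leafCount ω i : ℝ)/(n:ℝ) - 1/(m:ℝ)| with hDdef
  set T : ℝ := ∑ i : Fin m, D i with hTdef
  have hD0 : ∀ i, 0 ≤ D i := fun i => abs_nonneg _
  have hDT : ∀ i : Fin m, D i ≤ T := fun i =>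
    Finset.single_le_sum (fun j _ => hD0 j) (Finset.mem_univ i)
  have hT0 : 0 ≤ T := Finset.sum_nonneg fun i _ => hD0 i
  -- real-valued degree
  set b : Fin m → ℝ := fun i => if i.val = 0 ∨ i.val = m - 1 then (1:ℝ) else 2 with hbdef
  have hdeg : ∀ i, (degS ω i : ℝ) = (leafCount ω i : ℝ) + b i := by
    intro i
    unfold degS
    push_cast [apply_ite (fun x : ℕ => (x:ℝ))]
    rfl
  have hb1 : ∀ i, 0 ≤ b i := by intro i; rw [hbdef]; dsimp only; split <;> norm_num
  have hb2 : ∀ i, b i ≤ 2 := by intro i; rw [hbdef]; dsimp only; split <;> norm_num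
  have hX0 : ∀ i, (0:ℝ) ≤ (leafCount ω i : ℝ)/(n:ℝ) := fun i => by positivity
  have hX1 : ∀ i, (leafCount ω i : ℝ)/(n:ℝ) ≤ 1 := by
    intro i
    rw [div_le_one hn0]
    exact_mod_cast leafCount_le ω i
  have ha0 : (0:ℝ) ≤ 1/(m:ℝ) := by positivity
  have ha1 : 1/(m:ℝ) ≤ 1 := by
    rw [div_le_one hm0]; exact_mod_cast (by omega : 1 ≤ m)
  have hβ0 : ∀ i, 0 ≤ b i / (n:ℝ) := fun i => by positivity
  have hβ2 : ∀ i, b i / (n:ℝ) ≤ 2/(n:ℝ) := fun i => by gcongr; exact hb2 i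
  -- cast randic
  have hr : (randic ω : ℝ)
      = (∑ i : Fin m, if h : i.val + 1 < m then (degS ω i : ℝ) * (degS ω ⟨i.val+1,h⟩ : ℝ) else 0)
        + ∑ i : Fin m, (leafCount ω i : ℝ) * (degS ω i : ℝ) := by
    unfold randic
    push_cast [apply_dite (fun x : ℕ => (x:ℝ))]
    ring
  -- decompose the constant
  have hcard : (Finset.univ.filter (fun i : Fin m => i.val + 1 < m)).card = m - 1 := by
    have he : (Finset.univ.filter (fun i : Fin m => i.val + 1 < m))
        = Finset.univ.erase ⟨m-1, by omega⟩ := by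
      ext i
      have hi := i.isLt
      simp only [Finset.mem_filter, Finset.mem_univ, true_and, Finset.mem_erase, ne_eq,
        Fin.ext_iff, Fin.val_mk, and_true]
      omega
    rw [he, Finset.card_erase_of_mem (Finset.mem_univ _)]
    simp
  have hc : (2*(m:ℝ)-1)/(m:ℝ)^2
      = (∑ i : Fin m, if i.val + 1 < m then 1/(m:ℝ)^2 else 0) + ∑ i : Fin m, 1/(m:ℝ)^2 := by
    rw [← Finset.sum_filter, Finset.sum_const, hcard, Finset.sum_const, Finset.card_univ,
      Fintype.card_fin, nsmul_eq_mul, nsmul_eq_mul]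
    rw [Nat.cast_sub (by omega : 1 ≤ m)]
    push_cast
    field_simp
    ring
  have key : (randic ω : ℝ)/(n:ℝ)^2 - (2*(m:ℝ)-1)/(m:ℝ)^2
      = (∑ i : Fin m,
          ((if h : i.val + 1 < m then (degS ω i : ℝ) * (degS ω ⟨i.val+1,h⟩ : ℝ) else 0)/(n:ℝ)^2
            - (if i.val + 1 < m then 1/(m:ℝ)^2 else 0)))
        + ∑ i : Fin m, ((leafCount ω i : ℝ) * (degS ω i : ℝ)/(n:ℝ)^2 - 1/(m:ℝ)^2) := by
    rw [hr, hc, add_div, Finset.sum_div, Finset.sum_div, Finset.sum_sub_distrib,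
      Finset.sum_sub_distrib]
    ring
  rw [key]
  have hE : ∀ i : Fin m,
      |(if h : i.val + 1 < m then (degS ω i : ℝ) * (degS ω ⟨i.val+1,h⟩ : ℝ) else 0)/(n:ℝ)^2
        - (if i.val + 1 < m then 1/(m:ℝ)^2 else 0)| ≤ D i + T + 8/(n:ℝ) := by
    intro i
    by_cases h : i.val + 1 < m
    · rw [dif_pos h, if_pos h]
      set i' : Fin m := ⟨i.val+1, h⟩
      have heq : (degS ω i : ℝ) * (degS ω i' : ℝ)/(n:ℝ)^2
          = ((leafCount ω i : ℝ)/(n:ℝ) + b i/(n:ℝ)) * ((leafCount ω i' : ℝ)/(n:ℝ) + b i'/(n:ℝ)) := by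
        rw [hdeg i, hdeg i']
        ring
      have heq2 : (1:ℝ)/(m:ℝ)^2 = (1/(m:ℝ)) * (1/(m:ℝ)) := by
        ring
      rw [heq, heq2]
      have := prod_bound n hn ((leafCount ω i : ℝ)/(n:ℝ)) ((leafCount ω i' : ℝ)/(n:ℝ))
        (1/(m:ℝ)) (b i/(n:ℝ)) (b i'/(n:ℝ)) (hX0 i) (hX1 i) (hX0 i') (hX1 i') ha0 ha1
        (hβ0 i) (hβ2 i) (hβ0 i') (hβ2 i')
      calc _ ≤ |(leafCount ω i : ℝ)/(n:ℝ) - 1/(m:ℝ)|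
            + |(leafCount ω i' : ℝ)/(n:ℝ) - 1/(m:ℝ)| + 8/(n:ℝ) := this
        _ ≤ D i + T + 8/(n:ℝ) := by
            have h1 : |(leafCount ω i' : ℝ)/(n:ℝ) - 1/(m:ℝ)| = D i' := rfl
            have h2 : |(leafCount ω i : ℝ)/(n:ℝ) - 1/(m:ℝ)| = D i := rfl
            rw [h1, h2]
            have := hDT i'
            linarith
    · rw [dif_neg h, if_neg h]
      simp only [zero_div, sub_zero, abs_zero]
      have h8 : (0:ℝ) ≤ 8/(n:ℝ) := by positivity
      linarith [hD0 i, hT0]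
  have hP : ∀ i : Fin m,
      |(leafCount ω i : ℝ) * (degS ω i : ℝ)/(n:ℝ)^2 - 1/(m:ℝ)^2| ≤ 2 * D i + 2/(n:ℝ) := by
    intro i
    have heq : (leafCount ω i : ℝ) * (degS ω i : ℝ)/(n:ℝ)^2
        = ((leafCount ω i : ℝ)/(n:ℝ)) * ((leafCount ω i : ℝ)/(n:ℝ) + b i/(n:ℝ)) := by
      rw [hdeg i]
      ring
    have heq2 : (1:ℝ)/(m:ℝ)^2 = (1/(m:ℝ)) * (1/(m:ℝ)) := by ring
    rw [heq, heq2]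
    exact self_bound n hn ((leafCount ω i : ℝ)/(n:ℝ)) (1/(m:ℝ)) (b i/(n:ℝ))
      (hX0 i) (hX1 i) ha0 ha1 (hβ0 i) (hβ2 i)
  calc |(∑ i : Fin m,
          ((if h : i.val + 1 < m then (degS ω i : ℝ) * (degS ω ⟨i.val+1,h⟩ : ℝ) else 0)/(n:ℝ)^2
            - (if i.val + 1 < m then 1/(m:ℝ)^2 else 0)))
        + ∑ i : Fin m, ((leafCount ω i : ℝ) * (degS ω i : ℝ)/(n:ℝ)^2 - 1/(m:ℝ)^2)|
      ≤ (∑ i : Fin m, (D i + T + 8/(n:ℝ))) + ∑ i : Fin m, (2 * D i + 2/(n:ℝ)) := by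
        apply (abs_add_le _ _).trans
        gcongr
        · exact (Finset.abs_sum_le_sum_abs _ _).trans (Finset.sum_le_sum fun i _ => hE i)
        · exact (Finset.abs_sum_le_sum_abs _ _).trans (Finset.sum_le_sum fun i _ => hP i)
    _ = ((m:ℝ)+3) * T + 10*(m:ℝ)/(n:ℝ) := by
        rw [Finset.sum_add_distrib, Finset.sum_add_distrib, Finset.sum_add_distrib,
          Finset.sum_const, Finset.sum_const, Finset.sum_const, ← Finset.mul_sum]
        simp only [Finset.card_univ, Fintype.card_fin, nsmul_eq_mul, ← hTdef]
        field_simp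
        ring

/-- `R_n / n²` converges to `(2m-1)/m²` in `L¹` as `n → ∞`. -/
theorem randic_L1_convergence (m : ℕ) (hm : 2 ≤ m) :
    Tendsto (fun n : ℕ =>
        (∑ ω : Fin n → Fin m,
          |(randic ω : ℝ) / (n : ℝ) ^ 2 - (2 * m - 1) / m ^ 2|) / (m : ℝ) ^ n)
      atTop (nhds 0) := by
  have hm0 : (0:ℝ) < m := by positivity
  have hg0 : ∀ n : ℕ, 0 ≤ (∑ ω : Fin n → Fin m,
      |(randic ω : ℝ) / (n : ℝ) ^ 2 - (2 * (m:ℝ) - 1) / (m:ℝ) ^ 2|) / (m : ℝ) ^ n :=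
    fun n => div_nonneg (Finset.sum_nonneg fun ω _ => abs_nonneg _) (by positivity)
  have hbound : ∀ n : ℕ, 2 ≤ n →
      (∑ ω : Fin n → Fin m,
        |(randic ω : ℝ) / (n : ℝ) ^ 2 - (2 * (m:ℝ) - 1) / (m:ℝ) ^ 2|) / (m : ℝ) ^ n
      ≤ ((m:ℝ)+3)*m/Real.sqrt n + 10*m/n := by
    intro n hn2
    obtain ⟨k, rfl⟩ : ∃ k, n = k + 2 := ⟨n - 2, by omega⟩
    have hn1 : 1 ≤ k + 2 := by omega
    have hMn : (0:ℝ) < (m:ℝ)^(k+2) := by positivity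
    have hnc : ((k+2 : ℕ) : ℝ) = (k:ℝ) + 2 := by push_cast; ring
    have hsqpos : (0:ℝ) < Real.sqrt ((k+2 : ℕ) : ℝ) := by
      rw [hnc]; exact Real.sqrt_pos.mpr (by positivity)
    have hstep1 : ∑ ω : Fin (k+2) → Fin m,
        |(randic ω : ℝ)/(((k+2:ℕ)):ℝ)^2 - (2*(m:ℝ)-1)/(m:ℝ)^2|
        ≤ ((m:ℝ)+3) * (∑ ω : Fin (k+2) → Fin m, ∑ i : Fin m,
            |(leafCount ω i : ℝ)/(((k+2:ℕ)):ℝ) - 1/(m:ℝ)|)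
          + (m:ℝ)^(k+2) * (10*(m:ℝ)/(((k+2:ℕ)):ℝ)) := by
      calc ∑ ω : Fin (k+2) → Fin m,
          |(randic ω : ℝ)/(((k+2:ℕ)):ℝ)^2 - (2*(m:ℝ)-1)/(m:ℝ)^2|
          ≤ ∑ ω : Fin (k+2) → Fin m, (((m:ℝ)+3) * (∑ i : Fin m,
              |(leafCount ω i : ℝ)/(((k+2:ℕ)):ℝ) - 1/(m:ℝ)|) + 10*(m:ℝ)/(((k+2:ℕ)):ℝ)) :=
            Finset.sum_le_sum fun ω _ => pointwise_bound hm hn1 ω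
        _ = ((m:ℝ)+3) * (∑ ω : Fin (k+2) → Fin m, ∑ i : Fin m,
              |(leafCount ω i : ℝ)/(((k+2:ℕ)):ℝ) - 1/(m:ℝ)|)
            + (m:ℝ)^(k+2) * (10*(m:ℝ)/(((k+2:ℕ)):ℝ)) := by
            rw [Finset.sum_add_distrib, ← Finset.mul_sum, Finset.sum_const, Finset.card_univ,
              card_fun_fin, nsmul_eq_mul]
            push_cast
            ring
    have hstep2 : (∑ ω : Fin (k+2) → Fin m, ∑ i : Fin m,
          |(leafCount ω i : ℝ)/(((k+2:ℕ)):ℝ) - 1/(m:ℝ)|)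
        ≤ (m:ℝ) * ((m:ℝ)^(k+2) / Real.sqrt (((k+2:ℕ)):ℝ)) := by
      rw [Finset.sum_comm]
      calc ∑ i : Fin m, ∑ ω : Fin (k+2) → Fin m,
            |(leafCount ω i : ℝ)/(((k+2:ℕ)):ℝ) - 1/(m:ℝ)|
          ≤ ∑ _i : Fin m, (m:ℝ)^(k+2) / Real.sqrt (((k+2:ℕ)):ℝ) := by
            apply Finset.sum_le_sum
            intro i _
            have := sum_dev_le (k := k) hm i
            calc ∑ ω : Fin (k+2) → Fin m, |(leafCount ω i : ℝ)/(((k+2:ℕ)):ℝ) - 1/(m:ℝ)|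
                = ∑ ω : Fin (k+2) → Fin m, |(leafCount ω i : ℝ)/((k:ℝ)+2) - 1/(m:ℝ)| := by
                  rw [hnc]
              _ ≤ (m:ℝ)^(k+2) / Real.sqrt ((k:ℝ)+2) := this
              _ = (m:ℝ)^(k+2) / Real.sqrt (((k+2:ℕ)):ℝ) := by rw [hnc]
        _ = (m:ℝ) * ((m:ℝ)^(k+2) / Real.sqrt (((k+2:ℕ)):ℝ)) := by
            rw [Finset.sum_const, Finset.card_univ, Fintype.card_fin, nsmul_eq_mul]
    rw [div_le_iff₀ hMn]
    calc ∑ ω : Fin (k+2) → Fin m,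
        |(randic ω : ℝ)/(((k+2:ℕ)):ℝ)^2 - (2*(m:ℝ)-1)/(m:ℝ)^2|
        ≤ ((m:ℝ)+3) * ((m:ℝ) * ((m:ℝ)^(k+2) / Real.sqrt (((k+2:ℕ)):ℝ)))
          + (m:ℝ)^(k+2) * (10*(m:ℝ)/(((k+2:ℕ)):ℝ)) := by
          refine hstep1.trans ?_
          gcongr
      _ = (((m:ℝ)+3)*m/Real.sqrt (((k+2:ℕ)):ℝ) + 10*(m:ℝ)/(((k+2:ℕ)):ℝ)) * (m:ℝ)^(k+2) := by
          have h1 : Real.sqrt (((k+2:ℕ)):ℝ) ≠ 0 := ne_of_gt hsqpos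
          have h2 : (((k+2:ℕ)):ℝ) ≠ 0 := by rw [hnc]; positivity
          field_simp
  have hsq : Tendsto (fun n : ℕ => Real.sqrt n) atTop atTop := by
    rw [tendsto_atTop]
    intro b
    filter_upwards [eventually_ge_atTop (Nat.ceil (b^2))] with n hn
    rcases le_or_gt b 0 with hb | hb
    · exact hb.trans (Real.sqrt_nonneg _)
    · rw [show b = Real.sqrt (b^2) by rw [Real.sqrt_sq hb.le]]
      apply Real.sqrt_le_sqrt
      calc b^2 ≤ (Nat.ceil (b^2) : ℝ) := Nat.le_ceil _
        _ ≤ n := by exact_mod_cast hn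
  have h1 : Tendsto (fun n : ℕ => ((m:ℝ)+3)*m/Real.sqrt n) atTop (nhds 0) := by
    have h := hsq.inv_tendsto_atTop
    have h2 := h.const_mul (((m:ℝ)+3)*(m:ℝ))
    rw [mul_zero] at h2
    simpa [div_eq_mul_inv, Function.comp] using h2
  have h2 : Tendsto (fun n : ℕ => 10*(m:ℝ)/(n:ℝ)) atTop (nhds 0) := by
    have h := tendsto_one_div_atTop_nhds_zero_nat.const_mul (10*(m:ℝ))
    rw [mul_zero] at h
    have : (fun n : ℕ => 10*(m:ℝ) * (1/(n:ℝ))) = fun n : ℕ => 10*(m:ℝ)/(n:ℝ) := by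
      funext n; ring
    rwa [this] at h
  have hlim : Tendsto (fun n : ℕ => ((m:ℝ)+3)*m/Real.sqrt n + 10*(m:ℝ)/(n:ℝ)) atTop (nhds 0) := by
    have := h1.add h2
    rwa [add_zero] at this
  exact tendsto_of_tendsto_of_tendsto_of_le_of_le' tendsto_const_nhds hlim
    (Eventually.of_forall hg0) (eventually_atTop.2 ⟨2, hbound⟩)
end

section
/- For a random caterpillar with m ≥ 2 spine nodes, the conditional expectation of the Randić index (α = 1) satisfies E[R_j | F_{j-1}] ≥ R_{j-1} + (2j + 7m - 10)/m, so that {R_j - Σ_{k≤j}(2k+7m-10)/m} is a submartingale; in particular {R_j} is a submartingale. -/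
open Finset Filter MeasureTheory
open scoped ENNReal

lemma leafCount_snoc {m n : ℕ} (h : Fin n → Fin m) (c : Fin m) (i : Fin m) :
    leafCount (Fin.snoc h c) i = leafCount h i + if c = i then 1 else 0 := by
  unfold leafCount
  rw [Finset.card_filter, Finset.card_filter, Fin.sum_univ_castSucc]
  simp [Fin.snoc_castSucc, Fin.snoc_last]

lemma degS_snoc {m n : ℕ} (h : Fin n → Fin m) (c : Fin m) (i : Fin m) :
    degS (Fin.snoc h c) i = degS h i + if c = i then 1 else 0 := by
  unfold degS
  rw [leafCount_snoc]
  ring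

lemma sum_ite_one {m : ℕ} (i : Fin m) :
    ∑ c : Fin m, (if c = i then 1 else 0 : ℕ) = 1 := by
  simp

lemma sum_mul_deg {m : ℕ} (a b : ℕ) (i i' : Fin m) (hne : i ≠ i') :
    ∑ c : Fin m, (a + if c = i then 1 else 0) * (b + if c = i' then 1 else 0)
      = m * (a * b) + (a + b) := by
  have key : ∀ c : Fin m, (a + if c = i then 1 else 0) * (b + if c = i' then 1 else 0)
      = a * b + ((a * if c = i' then 1 else 0)
        + ((if c = i then 1 else 0) * b
        + (if c = i then 1 else 0) * (if c = i' then 1 else 0))) := by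
    intro c; ring
  simp only [key]
  rw [Finset.sum_add_distrib, Finset.sum_add_distrib, Finset.sum_add_distrib]
  have h0 : ∑ c : Fin m, (if c = i then 1 else 0 : ℕ) * (if c = i' then 1 else 0) = 0 := by
    apply Finset.sum_eq_zero
    intro c _
    split_ifs with h1 h2 <;> simp_all
  have h1 : ∑ x : Fin m, (a * if x = i' then 1 else 0) = a := by
    rw [← Finset.mul_sum, sum_ite_one, mul_one]
  have h2 : ∑ x : Fin m, ((if x = i then 1 else 0 : ℕ) * b) = b := by
    rw [← Finset.sum_mul, sum_ite_one, one_mul]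
  rw [h0, h1, h2, Finset.sum_const, Finset.card_univ, Fintype.card_fin, smul_eq_mul]
  ring

lemma sum_mul_same {m : ℕ} (a b : ℕ) (i : Fin m) :
    ∑ c : Fin m, (a + if c = i then 1 else 0) * (b + if c = i then 1 else 0)
      = m * (a * b) + (a + b + 1) := by
  have key : ∀ c : Fin m, (a + if c = i then 1 else 0) * (b + if c = i then 1 else 0)
      = a * b + ((a * if c = i then 1 else 0)
        + ((if c = i then 1 else 0) * b
        + (if c = i then 1 else 0) * (if c = i then 1 else 0))) := by
    intro c; ring
  simp only [key]
  rw [Finset.sum_add_distrib, Finset.sum_add_distrib, Finset.sum_add_distrib]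
  have h0 : ∑ c : Fin m, (if c = i then 1 else 0 : ℕ) * (if c = i then 1 else 0) = 1 := by
    have : ∀ c : Fin m, (if c = i then 1 else 0 : ℕ) * (if c = i then 1 else 0)
        = (if c = i then 1 else 0 : ℕ) := by intro c; split_ifs <;> simp
    simp only [this, sum_ite_one]
  have h1 : ∑ x : Fin m, (a * if x = i then 1 else 0) = a := by
    rw [← Finset.mul_sum, sum_ite_one, mul_one]
  have h2 : ∑ x : Fin m, ((if x = i then 1 else 0 : ℕ) * b) = b := by
    rw [← Finset.sum_mul, sum_ite_one, one_mul]
  rw [h0, h1, h2, Finset.sum_const, Finset.card_univ, Fintype.card_fin, smul_eq_mul]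
  ring

lemma sum_leafCount_s13 {m n : ℕ} (h : Fin n → Fin m) :
    ∑ i : Fin m, leafCount h i = n := by
  unfold leafCount
  have := Finset.card_eq_sum_card_fiberwise
    (s := (Finset.univ : Finset (Fin n))) (t := (Finset.univ : Finset (Fin m)))
    (f := h) (fun x _ => Finset.mem_univ _)
  simpa using this.symm

lemma sum_degS {m n : ℕ} (hm : 2 ≤ m) (h : Fin n → Fin m) :
    ∑ i : Fin m, degS h i + 2 = n + 2 * m := by
  unfold degS
  rw [Finset.sum_add_distrib, sum_leafCount_s13]
  obtain ⟨M, rfl⟩ : ∃ M, m = M + 2 := ⟨m - 2, by omega⟩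
  have : ∑ i : Fin (M + 2), (if (i : ℕ) = 0 ∨ (i : ℕ) = M + 2 - 1 then 1 else 2)
      = ∑ i ∈ Finset.range (M + 2), (if i = 0 ∨ i = M + 2 - 1 then 1 else 2) :=
    Fin.sum_univ_eq_sum_range (fun i => if i = 0 ∨ i = M + 2 - 1 then (1 : ℕ) else 2) (M + 2)
  rw [this, Finset.sum_range_succ, Finset.sum_range_succ']
  have hmid : ∀ i ∈ Finset.range M,
      (if i + 1 = 0 ∨ i + 1 = M + 2 - 1 then 1 else 2) = 2 := by
    intro i hi
    rw [Finset.mem_range] at hi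
    rw [if_neg]; omega
  rw [Finset.sum_congr rfl hmid, Finset.sum_const, Finset.card_range, smul_eq_mul,
    if_pos (by omega), if_pos (by omega)]
  omega

lemma edge_sum_aux (g : ℕ → ℕ) (M : ℕ) :
    ∑ i ∈ Finset.range (M + 2), (if i + 1 < M + 2 then g i + g (i + 1) else 0)
      + (g 0 + g (M + 1)) = 2 * ∑ i ∈ Finset.range (M + 2), g i := by
  rw [Finset.sum_range_succ, if_neg (by omega)]
  have hmid : ∀ i ∈ Finset.range (M + 1),
      (if i + 1 < M + 2 then g i + g (i + 1) else 0) = g i + g (i + 1) := by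
    intro i hi
    rw [Finset.mem_range] at hi
    rw [if_pos (by omega)]
  rw [Finset.sum_congr rfl hmid, Finset.sum_add_distrib]
  have e1 : ∑ i ∈ Finset.range (M + 1), g (i + 1) + g 0
      = ∑ i ∈ Finset.range (M + 2), g i := (Finset.sum_range_succ' g (M + 1)).symm
  have e2 : ∑ i ∈ Finset.range (M + 2), g i
      = ∑ i ∈ Finset.range (M + 1), g i + g (M + 1) := Finset.sum_range_succ g (M + 1)
  omega

lemma edge_sum {m n : ℕ} (hm : 2 ≤ m) (h : Fin n → Fin m) :
    (∑ i : Fin m, if hlt : (i : ℕ) + 1 < m then degS h i + degS h ⟨(i : ℕ) + 1, hlt⟩ else 0)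
      + (degS h ⟨0, by omega⟩ + degS h ⟨m - 1, by omega⟩)
      = 2 * ∑ i : Fin m, degS h i := by
  set g : ℕ → ℕ := fun k => if hk : k < m then degS h ⟨k, hk⟩ else 0 with hg
  have hgval : ∀ i : Fin m, g (i : ℕ) = degS h i := by
    intro i
    simp [hg, i.isLt]
  have e1 : (∑ i : Fin m, if hlt : (i : ℕ) + 1 < m
        then degS h i + degS h ⟨(i : ℕ) + 1, hlt⟩ else 0)
      = ∑ i ∈ Finset.range m, (if i + 1 < m then g i + g (i + 1) else 0) := by
    rw [← Fin.sum_univ_eq_sum_range (fun i => if i + 1 < m then g i + g (i + 1) else 0) m]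
    refine Finset.sum_congr rfl fun i _ => ?_
    by_cases hi : (i : ℕ) + 1 < m
    · rw [dif_pos hi, if_pos hi, hgval i, hg]
      simp [hi]
    · rw [dif_neg hi, if_neg hi]
  have e2 : ∑ i : Fin m, degS h i = ∑ i ∈ Finset.range m, g i := by
    rw [← Fin.sum_univ_eq_sum_range g m]
    exact Finset.sum_congr rfl fun i _ => (hgval i).symm
  obtain ⟨M, rfl⟩ : ∃ M, m = M + 2 := ⟨m - 2, by omega⟩
  rw [e1, e2]
  have h0 : degS h ⟨0, by omega⟩ = g 0 := by simp [hg]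
  have h1 : degS h (⟨M + 2 - 1, by omega⟩ : Fin (M + 2)) = g (M + 1) := by
    simp [hg]
  rw [h0, h1]
  exact edge_sum_aux g M

lemma sum_randic_snoc {m n : ℕ} (h : Fin n → Fin m) :
    ∑ c : Fin m, randic (Fin.snoc h c)
      = m * randic h
        + ((∑ i : Fin m, if hlt : (i : ℕ) + 1 < m
              then degS h i + degS h ⟨(i : ℕ) + 1, hlt⟩ else 0)
          + (∑ i : Fin m, leafCount h i) + (∑ i : Fin m, degS h i) + m) := by
  unfold randic
  simp only [leafCount_snoc h, degS_snoc h]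
  rw [Finset.sum_add_distrib]
  have hA : (∑ c : Fin m, ∑ i : Fin m, if hlt : (i : ℕ) + 1 < m
        then (degS h i + if c = i then 1 else 0)
          * (degS h ⟨(i : ℕ) + 1, hlt⟩ + if c = ⟨(i : ℕ) + 1, hlt⟩ then 1 else 0) else 0)
      = ∑ i : Fin m, (m * (if hlt : (i : ℕ) + 1 < m
            then degS h i * degS h ⟨(i : ℕ) + 1, hlt⟩ else 0)
          + (if hlt : (i : ℕ) + 1 < m
            then degS h i + degS h ⟨(i : ℕ) + 1, hlt⟩ else 0)) := by
    rw [Finset.sum_comm]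
    refine Finset.sum_congr rfl fun i _ => ?_
    by_cases hi : (i : ℕ) + 1 < m
    · simp only [dif_pos hi]
      exact sum_mul_deg _ _ i ⟨(i : ℕ) + 1, hi⟩ (Fin.ne_of_val_ne (by simp))
    · simp [dif_neg hi]
  have hB : (∑ c : Fin m, ∑ i : Fin m,
        (leafCount h i + if c = i then 1 else 0) * (degS h i + if c = i then 1 else 0))
      = ∑ i : Fin m, (m * (leafCount h i * degS h i) + (leafCount h i + degS h i + 1)) := by
    rw [Finset.sum_comm]
    exact Finset.sum_congr rfl fun i _ => sum_mul_same _ _ i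
  rw [hA, hB, Finset.sum_add_distrib, Finset.sum_add_distrib, ← Finset.mul_sum,
    ← Finset.mul_sum, Finset.sum_add_distrib, Finset.sum_add_distrib,
    Finset.sum_const, Finset.card_univ, Fintype.card_fin, smul_eq_mul, mul_one]
  ring

lemma endpoints_le {m n : ℕ} (hm : 2 ≤ m) (h : Fin n → Fin m) :
    degS h ⟨0, by omega⟩ + degS h ⟨m - 1, by omega⟩ ≤ n + 2 := by
  have hne : (⟨0, by omega⟩ : Fin m) ≠ ⟨m - 1, by omega⟩ :=
    Fin.ne_of_val_ne (show (0 : ℕ) ≠ m - 1 by omega)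
  have hle : leafCount h ⟨0, by omega⟩ + leafCount h ⟨m - 1, by omega⟩ ≤ n := by
    have := Finset.sum_le_sum_of_subset
      (Finset.subset_univ ({⟨0, by omega⟩, ⟨m - 1, by omega⟩} : Finset (Fin m)))
      (f := leafCount h)
    rw [Finset.sum_pair hne, sum_leafCount_s13 h] at this
    exact this
  unfold degS
  rw [if_pos (Or.inl rfl), if_pos (Or.inr rfl)]
  omega

lemma key_ineq {m n : ℕ} (hm : 2 ≤ m) (h : Fin n → Fin m) :
    m * randic h + 2 * n + 7 * m ≤ (∑ c : Fin m, randic (Fin.snoc h c)) + 8 := by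
  rw [sum_randic_snoc h]
  have E := edge_sum hm h
  have SD := sum_degS hm h
  have SX := sum_leafCount_s13 h
  have EP := endpoints_le hm h
  generalize m * randic h = t
  omega

/-- Submartingale property of the Randić index (α = 1): conditioning on any history `h`
of the first `n` choices (which generate `F_n`) and averaging over the next uniform
choice, `E[R_{n+1} | F_n] ≥ R_n + (2(n+1) + 7m - 10)/m`; in particular
`R_j - Σ_{k ≤ j} (2k+7m-10)/m`, and hence `R_j` itself, is a submartingale. -/
theorem randic_submartingale (m : ℕ) (hm : 2 ≤ m) :
    ∀ (n : ℕ) (h : Fin n → Fin m),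
      (∑ c : Fin m, (randic (Fin.snoc h c) : ℝ)) / m
        ≥ (randic h : ℝ) + (2 * (n + 1 : ℝ) + 7 * m - 10) / m := by
  intro n h
  have key := key_ineq hm h
  have hm0 : (0 : ℝ) < (m : ℝ) := by
    have : 0 < m := by omega
    exact_mod_cast this
  rw [ge_iff_le]
  have hrhs : (randic h : ℝ) + (2 * ((n : ℝ) + 1) + 7 * (m : ℝ) - 10) / m
      = ((m : ℝ) * randic h + (2 * ((n : ℝ) + 1) + 7 * (m : ℝ) - 10)) / m := by
    field_simp
  rw [hrhs]
  gcongr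
  have key' : ((m * randic h + 2 * n + 7 * m : ℕ) : ℝ)
      ≤ (((∑ c : Fin m, randic (Fin.snoc h c)) + 8 : ℕ) : ℝ) := by exact_mod_cast key
  push_cast at key' ⊢
  linarith
end
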